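/- Under the setting of a two-child weighted pullback: let G₁, G₂ ∈ ℝ^{n×n} be constant symmetric positive semidefinite, Φ₁, Φ₂ : ℝⁿ → ℝ differentiable, B₁, B₂ : ℝⁿ × ℝⁿ → ℝ^{n×n} positive-semidefinite-valued, and w₁, w₂ : ℝⁿ → ℝ differentiable with wᵢ(x) > 0. Define Lᵢ(x,v) = (1/2)vᵀGᵢv - Φᵢ(x), hᵢ(x,v) = Lᵢ(x,v)∇wᵢ(x) - (vᵀ∇wᵢ(x))Gᵢv, M(x) = w₁(x)G₁ + w₂(x)G₂, and fᵢ(x,v) = -∇Φᵢ(x) - Bᵢ(x,v)v. Suppose a trajectory x(t) satisfies M(x)ẍ = w₁(x)f₁(x,ẋ) + h₁(x,ẋ) + w₂(x)f₂(x,ẋ) + h₂(x,ẋ). Then V(t) = Σᵢ wᵢ(x(t))[(1/2)ẋᵀGᵢẋ + Φᵢ(x)] satisfies V̇(t) = -ẋᵀ(w₁(x)B₁(x,ẋ) + w₂(x)B₂(x,ẋ))ẋ ≤ 0. -/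

import Mathlib

/-!
Each child contributes its weighted energy `wᵢ(x) (½ ẋᵀGᵢẋ + Φᵢ(x))`. By the product and chain
rules and the symmetry of `Gᵢ`, its time derivative is `ẋ · (wᵢ(Gᵢẍ + ∇Φᵢ) - hᵢ)`: the correction
term `hᵢ` absorbs exactly the part `(∇wᵢ · ẋ)(½ ẋᵀGᵢẋ + Φᵢ)` coming from the time variation of
the weight. Summing over the two children, the root equation turns the sum of these residuals into
`-(w₁B₁ + w₂B₂) ẋ`, whose power is nonpositive because the weights are positive and the `Bᵢ`
positive semidefinite.
-/

open Matrix

section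

variable {ι : Type*} [Fintype ι]

theorem HasDerivAt.dotProduct {u w : ℝ → ι → ℝ} {u' w' : ι → ℝ} {t : ℝ}
    (hu : HasDerivAt u u' t) (hw : HasDerivAt w w' t) :
    HasDerivAt (fun s => u s ⬝ᵥ w s) (u' ⬝ᵥ w t + u t ⬝ᵥ w') t :=
  (HasDerivAt.fun_sum (u := Finset.univ) fun i _ =>
    (hasDerivAt_pi.mp hu i).fun_mul (hasDerivAt_pi.mp hw i)).congr_deriv Finset.sum_add_distrib

theorem HasDerivAt.mulVec (G : Matrix ι ι ℝ) {u : ℝ → ι → ℝ} {u' : ι → ℝ} {t : ℝ}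
    (hu : HasDerivAt u u' t) : HasDerivAt (fun s => G *ᵥ u s) (G *ᵥ u') t :=
  G.mulVecLin.toContinuousLinearMap.hasFDerivAt.comp_hasDerivAt t hu

theorem Matrix.IsSymm.dotProduct_mulVec_comm {G : Matrix ι ι ℝ} (hG : G.IsSymm) (u w : ι → ℝ) :
    u ⬝ᵥ (G *ᵥ w) = w ⬝ᵥ (G *ᵥ u) := by
  rw [dotProduct_mulVec, ← mulVec_transpose, hG.eq, dotProduct_comm]

theorem HasDerivAt.half_dotProduct_mulVec_self {G : Matrix ι ι ℝ} (hG : G.IsSymm)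
    {v : ℝ → ι → ℝ} {a : ι → ℝ} {t : ℝ} (hv : HasDerivAt v a t) :
    HasDerivAt (fun s => (1 / 2 : ℝ) * (v s ⬝ᵥ (G *ᵥ v s))) (v t ⬝ᵥ (G *ᵥ a)) t := by
  refine ((hv.dotProduct (hv.mulVec G)).const_mul (1 / 2 : ℝ)).congr_deriv ?_
  rw [hG.dotProduct_mulVec_comm a]
  ring

theorem HasDerivAt.comp_of_fderiv_eq_dotProduct {f : (ι → ℝ) → ℝ} {g : ι → ℝ}
    {x : ℝ → ι → ℝ} {v : ι → ℝ} {t : ℝ} (hf : DifferentiableAt ℝ f (x t))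
    (hg : ∀ u, fderiv ℝ f (x t) u = g ⬝ᵥ u) (hx : HasDerivAt x v t) :
    HasDerivAt (fun s => f (x s)) (g ⬝ᵥ v) t := by
  have := hf.hasFDerivAt.comp_hasDerivAt t hx
  rwa [hg] at this

/-- RMPfusion's correction term `hᵢ = Lᵢ ∇wᵢ - (vᵀ∇wᵢ) Gᵢ v` with `Lᵢ = ½ vᵀGᵢv - Φᵢ`,
evaluated at the values `Φ = Φᵢ(x)`, `gradw = ∇wᵢ(x)` and the velocity `v`. -/
noncomputable def fusionCorrection (G : Matrix ι ι ℝ) (Φ : ℝ) (gradw v : ι → ℝ) : ι → ℝ :=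
  ((1 / 2 : ℝ) * (v ⬝ᵥ (G *ᵥ v)) - Φ) • gradw - (v ⬝ᵥ gradw) • (G *ᵥ v)

theorem dotProduct_fusionCorrection (G : Matrix ι ι ℝ) (Φ : ℝ) (gradw v : ι → ℝ) :
    v ⬝ᵥ fusionCorrection G Φ gradw v
      = -((gradw ⬝ᵥ v) * ((1 / 2 : ℝ) * (v ⬝ᵥ (G *ᵥ v)) + Φ)) := by
  simp only [fusionCorrection, dotProduct_sub, dotProduct_smul, smul_eq_mul,
    dotProduct_comm v gradw]
  ring

theorem hasDerivAt_weighted_energy {G : Matrix ι ι ℝ} (hG : G.IsSymm)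
    {w Φ : (ι → ℝ) → ℝ} {gradw gradΦ : ι → ℝ} {x v : ℝ → ι → ℝ} {a : ι → ℝ} {t : ℝ}
    (hw : DifferentiableAt ℝ w (x t)) (hgradw : ∀ u, fderiv ℝ w (x t) u = gradw ⬝ᵥ u)
    (hΦ : DifferentiableAt ℝ Φ (x t)) (hgradΦ : ∀ u, fderiv ℝ Φ (x t) u = gradΦ ⬝ᵥ u)
    (hx : HasDerivAt x (v t) t) (hv : HasDerivAt v a t) :
    HasDerivAt (fun s => w (x s) * ((1 / 2 : ℝ) * (v s ⬝ᵥ (G *ᵥ v s)) + Φ (x s)))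
      (v t ⬝ᵥ (w (x t) • (G *ᵥ a + gradΦ) - fusionCorrection G (Φ (x t)) gradw (v t))) t := by
  refine ((hx.comp_of_fderiv_eq_dotProduct hw hgradw).fun_mul
    ((hv.half_dotProduct_mulVec_self hG).fun_add
      (hx.comp_of_fderiv_eq_dotProduct hΦ hgradΦ))).congr_deriv ?_
  rw [dotProduct_sub, dotProduct_fusionCorrection, dotProduct_smul, dotProduct_add,
    dotProduct_comm (v t) gradΦ, smul_eq_mul]
  ring

theorem weighted_residual_add_eq_neg_damping {G₁ G₂ B₁ B₂ : Matrix ι ι ℝ} {w₁ w₂ : ℝ}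
    {gradΦ₁ gradΦ₂ v a : ι → ℝ} (h₁ h₂ : ι → ℝ)
    (hdyn : (w₁ • G₁ + w₂ • G₂) *ᵥ a =
      w₁ • (-gradΦ₁ - B₁ *ᵥ v) + h₁ + w₂ • (-gradΦ₂ - B₂ *ᵥ v) + h₂) :
    w₁ • (G₁ *ᵥ a + gradΦ₁) - h₁ + (w₂ • (G₂ *ᵥ a + gradΦ₂) - h₂)
      = -((w₁ • B₁ + w₂ • B₂) *ᵥ v) := by
  simp only [add_mulVec, smul_mulVec] at hdyn ⊢
  linear_combination (norm := module) hdyn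

end

/-- Two-child weighted pullback (Y-shaped RMP-tree* with identity transformations):
if `(w₁G₁+w₂G₂)ẍ = w₁f₁ + h₁ + w₂f₂ + h₂` with `fᵢ = -∇Φᵢ - Bᵢẋ`,
`hᵢ = Lᵢ∇wᵢ - (ẋᵀ∇wᵢ)Gᵢẋ`, `Lᵢ = ½ẋᵀGᵢẋ - Φᵢ`, then
`V = Σᵢ wᵢ(x)(½ẋᵀGᵢẋ + Φᵢ(x))` satisfies `V̇ = -ẋᵀ(w₁B₁+w₂B₂)ẋ ≤ 0`. -/
theorem rmpfusion_two_child_stability {n : ℕ}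
    (G₁ G₂ : Matrix (Fin n) (Fin n) ℝ)
    (hG₁ : G₁.PosSemidef) (hG₂ : G₂.PosSemidef)
    (B₁ B₂ : (Fin n → ℝ) → (Fin n → ℝ) → Matrix (Fin n) (Fin n) ℝ)
    (hB₁ : ∀ y u, (B₁ y u).PosSemidef) (hB₂ : ∀ y u, (B₂ y u).PosSemidef)
    (Φ₁ Φ₂ w₁ w₂ : (Fin n → ℝ) → ℝ)
    (gradΦ₁ gradΦ₂ gradw₁ gradw₂ : (Fin n → ℝ) → (Fin n → ℝ))
    (hΦ₁ : Differentiable ℝ Φ₁) (hΦ₂ : Differentiable ℝ Φ₂)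
    (hgradΦ₁ : ∀ y u, fderiv ℝ Φ₁ y u = gradΦ₁ y ⬝ᵥ u)
    (hgradΦ₂ : ∀ y u, fderiv ℝ Φ₂ y u = gradΦ₂ y ⬝ᵥ u)
    (hw₁ : Differentiable ℝ w₁) (hw₂ : Differentiable ℝ w₂)
    (hgradw₁ : ∀ y u, fderiv ℝ w₁ y u = gradw₁ y ⬝ᵥ u)
    (hgradw₂ : ∀ y u, fderiv ℝ w₂ y u = gradw₂ y ⬝ᵥ u)
    (hw₁pos : ∀ y, 0 < w₁ y) (hw₂pos : ∀ y, 0 < w₂ y)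
    (x v a : ℝ → (Fin n → ℝ))
    (hx : ∀ t, HasDerivAt x (v t) t)
    (hv : ∀ t, HasDerivAt v (a t) t)
    (hdyn : ∀ t,
      (w₁ (x t) • G₁ + w₂ (x t) • G₂) *ᵥ a t =
        w₁ (x t) • (-(gradΦ₁ (x t)) - B₁ (x t) (v t) *ᵥ v t)
          + (((1 / 2 : ℝ) * (v t ⬝ᵥ (G₁ *ᵥ v t)) - Φ₁ (x t)) • gradw₁ (x t)
              - (v t ⬝ᵥ gradw₁ (x t)) • (G₁ *ᵥ v t))
          + w₂ (x t) • (-(gradΦ₂ (x t)) - B₂ (x t) (v t) *ᵥ v t)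
          + (((1 / 2 : ℝ) * (v t ⬝ᵥ (G₂ *ᵥ v t)) - Φ₂ (x t)) • gradw₂ (x t)
              - (v t ⬝ᵥ gradw₂ (x t)) • (G₂ *ᵥ v t))) :
    ∀ t,
      HasDerivAt
        (fun s =>
          w₁ (x s) * ((1 / 2 : ℝ) * (v s ⬝ᵥ (G₁ *ᵥ v s)) + Φ₁ (x s))
            + w₂ (x s) * ((1 / 2 : ℝ) * (v s ⬝ᵥ (G₂ *ᵥ v s)) + Φ₂ (x s)))
        (-(v t ⬝ᵥ ((w₁ (x t) • B₁ (x t) (v t) + w₂ (x t) • B₂ (x t) (v t)) *ᵥ v t))) t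
      ∧ -(v t ⬝ᵥ ((w₁ (x t) • B₁ (x t) (v t) + w₂ (x t) • B₂ (x t) (v t)) *ᵥ v t)) ≤ 0 := by
  intro t
  have hV₁ := hasDerivAt_weighted_energy (isHermitian_iff_isSymm.mp hG₁.1)
    (hw₁ _) (hgradw₁ _) (hΦ₁ _) (hgradΦ₁ _) (hx t) (hv t)
  have hV₂ := hasDerivAt_weighted_energy (isHermitian_iff_isSymm.mp hG₂.1)
    (hw₂ _) (hgradw₂ _) (hΦ₂ _) (hgradΦ₂ _) (hx t) (hv t)
  have hbalance := weighted_residual_add_eq_neg_damping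
    (fusionCorrection G₁ (Φ₁ (x t)) (gradw₁ (x t)) (v t))
    (fusionCorrection G₂ (Φ₂ (x t)) (gradw₂ (x t)) (v t)) (hdyn t)
  have hdamping : (w₁ (x t) • B₁ (x t) (v t) + w₂ (x t) • B₂ (x t) (v t)).PosSemidef :=
    ((hB₁ _ _).smul (hw₁pos _).le).add ((hB₂ _ _).smul (hw₂pos _).le)
  refine ⟨(hV₁.fun_add hV₂).congr_deriv ?_, ?_⟩
  · rw [← dotProduct_add, hbalance, dotProduct_neg]
  · simpa using hdamping.dotProduct_mulVec_nonneg (v t)
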